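/- arXiv:1005.1212 — 2 statements merged into one kernel-verified Lean document; each statement's English description precedes it below -/
import Mathlib

section
/- Along any smooth curve τ ↦ q(τ), the total derivative of G(q(τ), q_τ(τ)), where G = G_{α₁…α_{2N}}(q) q^{α₁}_τ ⋯ q^{α_{2N}}_τ, satisfies d_τ G = −(2N/(2N−1)) q^β_τ E_β, where E_β = ((1/(2N)) ∂_β G_{μα₂…α_{2N}} − ∂_μ G_{βα₂…α_{2N}}) q^μ_τ q^{α₂}_τ ⋯ q^{α_{2N}}_τ − (2N−1) G_{βμα₃…α_{2N}} q^μ_{ττ} q^{α₃}_τ ⋯ q^{α_{2N}}_τ + G^{1−1/(2N)} F_{βμ} q^μ_τ and F is antisymmetric. -/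
open scoped BigOperators ContDiff

section aux
variable {m : ℕ}

private lemma sum_smul_single (w : Fin m → ℝ) :
    ∑ β : Fin m, w β • (Pi.single β 1 : Fin m → ℝ) = w := by
  funext i
  simp [Finset.sum_apply, Pi.single_apply]

private lemma fderiv_fst_apply {G : (Fin m → ℝ) → (Fin m → ℝ) → ℝ}
    (hd : Differentiable ℝ (fun p : (Fin m → ℝ) × (Fin m → ℝ) => G p.1 p.2))
    (q w e : Fin m → ℝ) :
    fderiv ℝ (fun x => G x w) q e
      = fderiv ℝ (fun p : (Fin m → ℝ) × (Fin m → ℝ) => G p.1 p.2) (q, w) (e, 0) := by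
  have h1 : HasFDerivAt (fun x : Fin m → ℝ => (x, w))
      (ContinuousLinearMap.inl ℝ _ _) q := hasFDerivAt_prodMk_left q w
  have h2 : HasFDerivAt (fun x : Fin m → ℝ => G x w)
      ((fderiv ℝ (fun p : (Fin m → ℝ) × (Fin m → ℝ) => G p.1 p.2) (q, w)).comp
        (ContinuousLinearMap.inl ℝ _ _)) q :=
    HasFDerivAt.comp (g := fun p : (Fin m → ℝ) × (Fin m → ℝ) => G p.1 p.2) q (hd (q, w)).hasFDerivAt h1
  rw [h2.fderiv]
  rfl

private lemma fderiv_snd_apply {G : (Fin m → ℝ) → (Fin m → ℝ) → ℝ}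
    (hd : Differentiable ℝ (fun p : (Fin m → ℝ) × (Fin m → ℝ) => G p.1 p.2))
    (q w e : Fin m → ℝ) :
    fderiv ℝ (fun v => G q v) w e
      = fderiv ℝ (fun p : (Fin m → ℝ) × (Fin m → ℝ) => G p.1 p.2) (q, w) (0, e) := by
  have h1 : HasFDerivAt (fun v : Fin m → ℝ => (q, v))
      (ContinuousLinearMap.inr ℝ _ _) w := hasFDerivAt_prodMk_right q w
  have h2 : HasFDerivAt (fun v : Fin m → ℝ => G q v)
      ((fderiv ℝ (fun p : (Fin m → ℝ) × (Fin m → ℝ) => G p.1 p.2) (q, w)).comp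
        (ContinuousLinearMap.inr ℝ _ _)) w :=
    (hd (q, w)).hasFDerivAt.comp w h1
  rw [h2.fderiv]
  rfl

private lemma clm_sum_fst (L : ((Fin m → ℝ) × (Fin m → ℝ)) →L[ℝ] ℝ) (w : Fin m → ℝ) :
    ∑ β : Fin m, w β * L (Pi.single β 1, 0) = L (w, 0) := by
  have h : ((w, (0 : Fin m → ℝ)) : (Fin m → ℝ) × (Fin m → ℝ))
      = ∑ β : Fin m, w β • (((Pi.single β 1 : Fin m → ℝ), (0 : Fin m → ℝ))) := by
    rw [Prod.ext_iff]
    constructor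
    · rw [Prod.fst_sum]; simpa using (sum_smul_single w).symm
    · rw [Prod.snd_sum]; simp
  rw [h, map_sum]
  exact Finset.sum_congr rfl fun β _ => by rw [map_smul]; simp [smul_eq_mul]

private lemma clm_sum_snd (L : ((Fin m → ℝ) × (Fin m → ℝ)) →L[ℝ] ℝ) (w : Fin m → ℝ) :
    ∑ β : Fin m, w β * L (0, Pi.single β 1) = L (0, w) := by
  have h : (((0 : Fin m → ℝ), w) : (Fin m → ℝ) × (Fin m → ℝ))
      = ∑ β : Fin m, w β • (((0 : Fin m → ℝ), (Pi.single β 1 : Fin m → ℝ))) := by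
    rw [Prod.ext_iff]
    constructor
    · rw [Prod.fst_sum]; simp
    · rw [Prod.snd_sum]; simpa using (sum_smul_single w).symm
  rw [h, map_sum]
  exact Finset.sum_congr rfl fun β _ => by rw [map_smul]; simp [smul_eq_mul]

private lemma euler_sum {N : ℕ} {G : (Fin m → ℝ) → (Fin m → ℝ) → ℝ}
    (hd : Differentiable ℝ (fun p : (Fin m → ℝ) × (Fin m → ℝ) => G p.1 p.2))
    (hGhom : ∀ (q v : Fin m → ℝ) (r : ℝ), G q (r • v) = r ^ (2 * N) * G q v)
    (q v : Fin m → ℝ) :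
    ∑ β : Fin m, v β * fderiv ℝ (fun w => G q w) v (Pi.single β 1)
      = (2 * N : ℝ) * G q v := by
  have hdq : Differentiable ℝ (fun w : Fin m → ℝ => G q w) := by
    intro w
    exact (hd (q, w)).comp w (((differentiable_const q).prodMk differentiable_id) w)
  have h1 : HasDerivAt (fun r : ℝ => G q (r • v))
      (fderiv ℝ (fun w => G q w) v v) 1 := by
    have hs : HasDerivAt (fun r : ℝ => r • v) v 1 := by
      simpa using (hasDerivAt_id (1:ℝ)).smul_const v
    have h := (hdq ((1:ℝ) • v)).hasFDerivAt.comp_hasDerivAt 1 hs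
    rw [one_smul] at h
    exact h
  have h2 : HasDerivAt (fun r : ℝ => G q (r • v)) ((2 * N : ℝ) * G q v) 1 := by
    have heq : (fun r : ℝ => G q (r • v)) = fun r : ℝ => r ^ (2 * N) * G q v :=
      funext fun r => hGhom q v r
    rw [heq]
    have := (hasDerivAt_pow (2 * N) (1:ℝ)).mul_const (G q v)
    refine this.congr_deriv ?_
    push_cast
    ring
  have hvv : fderiv ℝ (fun w => G q w) v v = (2 * N : ℝ) * G q v := h1.unique h2
  calc ∑ β : Fin m, v β * fderiv ℝ (fun w => G q w) v (Pi.single β 1)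
      = ∑ β : Fin m, fderiv ℝ (fun w => G q w) v (v β • (Pi.single β 1 : Fin m → ℝ)) := by
        simp [smul_eq_mul]
    _ = fderiv ℝ (fun w => G q w) v (∑ β : Fin m, v β • (Pi.single β 1 : Fin m → ℝ)) :=
        (map_sum _ _ _).symm
    _ = (2 * N : ℝ) * G q v := by rw [sum_smul_single v]; exact hvv

end aux

/-- Along any smooth curve, the total derivative of
`G = G_{α₁…α_{2N}}(q) q^{α₁}_τ ⋯ q^{α_{2N}}_τ` satisfies
`d_τ G = −(2N/(2N−1)) q^β_τ E_β`, where
`E_β = ((1/2N) ∂_β G_{μα₂…} − ∂_μ G_{βα₂…}) q^μ_τ q^{α₂}_τ⋯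
      − (2N−1) G_{βμα₃…} q^μ_{ττ} q^{α₃}_τ⋯ + G^{1−1/2N} F_{βμ} q^μ_τ`.
Since the tensor `G_{α₁…α_{2N}}` is symmetric, the contractions appearing in `E_β` are
expressed through partial derivatives of the scalar function `G(q,v)`:
`G_{βν₂…ν_{2N}} v^{ν₂}⋯v^{ν_{2N}} = (1/2N) ∂G/∂v^β`, so that
`E_β = (1/2N)(∂G/∂q^β − d_τ(∂G/∂v^β)) + G^{1−1/2N} F_{βμ} q^μ_τ`,
and `G` is a homogeneous polynomial of degree `2N` in `v`. -/
theorem total_derivative_of_G_along_curve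
    (mdim N : ℕ) (hN : 1 ≤ N)
    (G : (Fin mdim → ℝ) → (Fin mdim → ℝ) → ℝ)
    (hGsmooth : ContDiff ℝ (⊤ : ℕ∞) (fun p : (Fin mdim → ℝ) × (Fin mdim → ℝ) => G p.1 p.2))
    (hGhom : ∀ (q v : Fin mdim → ℝ) (r : ℝ), G q (r • v) = r ^ (2 * N) * G q v)
    (hGpos : ∀ (q v : Fin mdim → ℝ), v ≠ 0 → 0 < G q v)
    (A : (Fin mdim → ℝ) → Fin mdim → ℝ) (hA : ContDiff ℝ (⊤ : ℕ∞) A)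
    (F : (Fin mdim → ℝ) → Fin mdim → Fin mdim → ℝ)
    (hF : ∀ (q : Fin mdim → ℝ) (β μ : Fin mdim),
      F q β μ = fderiv ℝ (fun x => A x μ) q (Pi.single β 1)
        - fderiv ℝ (fun x => A x β) q (Pi.single μ 1))
    (c : ℝ → Fin mdim → ℝ) (hc : ContDiff ℝ (⊤ : ℕ∞) c) (hc' : ∀ τ : ℝ, deriv c τ ≠ 0)
    (E : Fin mdim → ℝ → ℝ)
    (hE : ∀ (β : Fin mdim) (t : ℝ),
      E β t = (1 / (2 * N : ℝ)) *
          (fderiv ℝ (fun x => G x (deriv c t)) (c t) (Pi.single β 1)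
            - deriv (fun u => fderiv ℝ (fun v => G (c u) v) (deriv c u) (Pi.single β 1)) t)
        + G (c t) (deriv c t) ^ ((1 : ℝ) - 1 / (2 * N)) *
            ∑ μ : Fin mdim, F (c t) β μ * deriv c t μ) :
    ∀ τ : ℝ,
      deriv (fun t => G (c t) (deriv c t)) τ =
        -((2 * N : ℝ) / (2 * N - 1)) * ∑ β : Fin mdim, deriv c τ β * E β τ := by
  intro τ
  classical
  have hone : (1 : WithTop ℕ∞) ≤ (∞ : WithTop ℕ∞) := by exact_mod_cast le_top
  have hΦd : Differentiable ℝ (fun p : (Fin mdim → ℝ) × (Fin mdim → ℝ) => G p.1 p.2) :=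
    hGsmooth.differentiable (by simp)
  have hcInf : ContDiff ℝ (∞ : WithTop ℕ∞) c := hc.of_le (by simp)
  have hcd : Differentiable ℝ c := hc.differentiable (by simp)
  have hv : ContDiff ℝ (∞ : WithTop ℕ∞) (deriv c) := (contDiff_infty_iff_deriv.mp hcInf).2
  have hvd : Differentiable ℝ (deriv c) := hv.differentiable (by simp)
  set γ : ℝ → (Fin mdim → ℝ) × (Fin mdim → ℝ) := fun t => (c t, deriv c t) with hγdef
  have hγd : ∀ t, HasDerivAt γ (deriv c t, deriv (deriv c) t) t := fun t =>
    (hcd t).hasDerivAt.prodMk (hvd t).hasDerivAt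
  have hγdiff : Differentiable ℝ γ := fun t => ((hcd t).prodMk (hvd t))
  set L : ((Fin mdim → ℝ) × (Fin mdim → ℝ)) →L[ℝ] ℝ :=
    fderiv ℝ (fun p : (Fin mdim → ℝ) × (Fin mdim → ℝ) => G p.1 p.2) (γ τ) with hLdef
  set a : ℝ → Fin mdim → ℝ := deriv (deriv c) with hadef
  -- total derivative along the curve
  have hD : HasDerivAt (fun t => G (c t) (deriv c t)) (L (deriv c τ, a τ)) τ :=
    (hΦd (γ τ)).hasFDerivAt.comp_hasDerivAt τ (hγd τ)
  -- the velocity-gradient functions g β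
  set gb : Fin mdim → ℝ → ℝ :=
    fun β u => fderiv ℝ (fun v => G (c u) v) (deriv c u) (Pi.single β 1) with hgbdef
  have hgbeq : ∀ β, gb β = fun u =>
      fderiv ℝ (fun p : (Fin mdim → ℝ) × (Fin mdim → ℝ) => G p.1 p.2) (γ u)
        (0, Pi.single β 1) :=
    fun β => funext fun u => fderiv_snd_apply hΦd (c u) (deriv c u) _
  have hH : ∀ β : Fin mdim, ContDiff ℝ (⊤ : ℕ∞)
      (fun p : (Fin mdim → ℝ) × (Fin mdim → ℝ) =>
        fderiv ℝ (fun p : (Fin mdim → ℝ) × (Fin mdim → ℝ) => G p.1 p.2) p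
          ((0 : Fin mdim → ℝ), Pi.single β 1)) := by
    intro β
    exact (hGsmooth.fderiv_right (by simp)).clm_apply contDiff_const
  have hgbd : ∀ β, DifferentiableAt ℝ (gb β) τ := by
    intro β
    rw [hgbeq β]
    exact (((hH β).differentiable (by simp)) (γ τ)).comp τ (hγdiff τ)
  -- Euler identity along the curve, differentiated
  have hS2 : HasDerivAt (fun u => ∑ β : Fin mdim, deriv c u β * gb β u)
      ((2 * N : ℝ) * L (deriv c τ, a τ)) τ := by
    have heq : (fun u => ∑ β : Fin mdim, deriv c u β * gb β u)
        = fun u => (2 * N : ℝ) * G (c u) (deriv c u) := by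
      funext u
      exact euler_sum hΦd hGhom (c u) (deriv c u)
    rw [heq]
    exact hD.const_mul _
  have hcomp : ∀ β : Fin mdim, HasDerivAt (fun u => deriv c u β) (a τ β) τ := by
    intro β
    have h := (ContinuousLinearMap.proj (R := ℝ) (φ := fun _ : Fin mdim => ℝ)
      β).hasFDerivAt.comp_hasDerivAt τ (hvd τ).hasDerivAt
    exact h
  have hS1 : HasDerivAt (fun u => ∑ β : Fin mdim, deriv c u β * gb β u)
      (∑ β : Fin mdim, (a τ β * gb β τ + deriv c τ β * deriv (gb β) τ)) τ :=
    HasDerivAt.fun_sum fun β _ => (hcomp β).mul (hgbd β).hasDerivAt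
  have hkey : ∑ β : Fin mdim, (a τ β * gb β τ + deriv c τ β * deriv (gb β) τ)
      = (2 * N : ℝ) * L (deriv c τ, a τ) := hS1.unique hS2
  -- identify the contracted sums with values of L
  have hgbval : ∀ β, gb β τ = L (0, Pi.single β 1) := by
    intro β
    rw [hgbeq β]
  have hQ : ∑ β : Fin mdim, a τ β * gb β τ = L (0, a τ) := by
    rw [← clm_sum_snd L (a τ)]
    exact Finset.sum_congr rfl fun β _ => by rw [hgbval β]
  have hP : ∑ β : Fin mdim, deriv c τ β
      * fderiv ℝ (fun x => G x (deriv c τ)) (c τ) (Pi.single β 1) = L (deriv c τ, 0) := by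
    rw [← clm_sum_fst L (deriv c τ)]
    exact Finset.sum_congr rfl fun β _ => by
      rw [fderiv_fst_apply hΦd (c τ) (deriv c τ) (Pi.single β 1)]
  have hdg : ∑ β : Fin mdim, deriv c τ β * deriv (gb β) τ
      = (2 * N : ℝ) * L (deriv c τ, a τ) - L (0, a τ) := by
    rw [← hkey, Finset.sum_add_distrib, hQ]
    ring
  -- antisymmetry of F kills the magnetic term
  have hFanti : ∀ (q : Fin mdim → ℝ) (β μ : Fin mdim), F q β μ = -F q μ β := by
    intro q β μ
    rw [hF, hF]
    ring
  have hzero : ∑ β : Fin mdim, deriv c τ β * ∑ μ : Fin mdim, F (c τ) β μ * deriv c τ μ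
      = 0 := by
    have hT : ∑ β : Fin mdim, ∑ μ : Fin mdim, deriv c τ β * (F (c τ) β μ * deriv c τ μ)
        = -∑ β : Fin mdim, ∑ μ : Fin mdim, deriv c τ β * (F (c τ) β μ * deriv c τ μ) := by
      calc ∑ β : Fin mdim, ∑ μ : Fin mdim, deriv c τ β * (F (c τ) β μ * deriv c τ μ)
          = ∑ β : Fin mdim, ∑ μ : Fin mdim,
              -(deriv c τ μ * (F (c τ) μ β * deriv c τ β)) := by
            refine Finset.sum_congr rfl fun β _ => Finset.sum_congr rfl fun μ _ => ?_
            rw [hFanti (c τ) β μ]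
            ring
        _ = ∑ μ : Fin mdim, ∑ β : Fin mdim,
              -(deriv c τ μ * (F (c τ) μ β * deriv c τ β)) := Finset.sum_comm
        _ = -∑ β : Fin mdim, ∑ μ : Fin mdim,
              deriv c τ β * (F (c τ) β μ * deriv c τ μ) := by
            simp [Finset.sum_neg_distrib]
    have : ∑ β : Fin mdim, ∑ μ : Fin mdim, deriv c τ β * (F (c τ) β μ * deriv c τ μ)
        = 0 := by linarith
    calc ∑ β : Fin mdim, deriv c τ β * ∑ μ : Fin mdim, F (c τ) β μ * deriv c τ μ
        = ∑ β : Fin mdim, ∑ μ : Fin mdim, deriv c τ β * (F (c τ) β μ * deriv c τ μ) := by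
          exact Finset.sum_congr rfl fun β _ => Finset.mul_sum _ _ _
      _ = 0 := this
  -- expand the right-hand side
  have hsum : ∑ β : Fin mdim, deriv c τ β * E β τ
      = (1 / (2 * N : ℝ)) *
          (L (deriv c τ, 0) - ((2 * N : ℝ) * L (deriv c τ, a τ) - L (0, a τ))) := by
    have expand : ∑ β : Fin mdim, deriv c τ β * E β τ
        = ∑ β : Fin mdim,
            ((1 / (2 * N : ℝ)) *
              (deriv c τ β
                  * fderiv ℝ (fun x => G x (deriv c τ)) (c τ) (Pi.single β 1)
                - deriv c τ β * deriv (gb β) τ)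
            + G (c τ) (deriv c τ) ^ ((1 : ℝ) - 1 / (2 * N)) *
                (deriv c τ β * ∑ μ : Fin mdim, F (c τ) β μ * deriv c τ μ)) := by
      simp only [hE]
      refine Finset.sum_congr rfl fun β _ => ?_
      simp only [hgbdef]
      ring
    rw [expand, Finset.sum_add_distrib, ← Finset.mul_sum, ← Finset.mul_sum,
      Finset.sum_sub_distrib, hP, hdg, hzero, mul_zero, add_zero]
  have hsplit : L (deriv c τ, a τ) = L (deriv c τ, 0) + L (0, a τ) := by
    rw [← map_add]
    congr 1
    simp [Prod.ext_iff]
  rw [hD.deriv, hsum, hsplit]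
  have hNpos : (1 : ℝ) ≤ (N : ℝ) := by exact_mod_cast hN
  have h1 : (2 * (N : ℝ)) ≠ 0 := by linarith
  have h2 : (2 * (N : ℝ) - 1) ≠ 0 := by linarith
  field_simp
  ring
end

section
/- Given the decomposition K^μ_λ = {_λ{}^μ{}_ν} ẋ^ν + σ^μ_λ(x, ẋ) of a connection into Levi–Civita part plus a soldering form σ, the geodesic equation for K preserves the constraint g_{λμ} ẋ^λ ẋ^μ = 1 if and only if g_{μν} σ^μ_λ ẋ^λ ẋ^ν = 0 on the constraint set. -/
noncomputable def Dg (g : (Fin 4 → ℝ) → Fin 4 → Fin 4 → ℝ)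
    (x : Fin 4 → ℝ) (l μ ν : Fin 4) : ℝ :=
  fderiv ℝ (fun y => g y μ ν) x (Pi.single l 1)

/-- Given the decomposition `K^μ_λ = {_λ{}^μ{}_ν} ẋ^ν + σ^μ_λ(x,ẋ)` of a connection into
its Levi–Civita part plus a soldering form `σ`, the geodesic equation for `K` preserves
the constraint `g_{λμ} ẋ^λ ẋ^μ = 1` — i.e. the metric-preservation condition
`(∂_λ g_{μν} ẋ^μ + 2 g_{μν} K^μ_λ) ẋ^λ ẋ^ν = 0` holds for all `ẋ` on the constraint
set — if and only if `g_{μν} σ^μ_λ ẋ^λ ẋ^ν = 0` on the constraint set. -/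
theorem soldering_decomposition_preserves_constraint_iff
    (g ginv : (Fin 4 → ℝ) → Fin 4 → Fin 4 → ℝ)
    (hg : ∀ μ ν : Fin 4, ContDiff ℝ (⊤ : ℕ∞) (fun x => g x μ ν))
    (hgsymm : ∀ (x : Fin 4 → ℝ) (μ ν : Fin 4), g x μ ν = g x ν μ)
    (hginv : ∀ (x : Fin 4 → ℝ) (μ ν : Fin 4),
      ∑ β : Fin 4, ginv x μ β * g x β ν = if μ = ν then 1 else 0)
    (Γ : (Fin 4 → ℝ) → Fin 4 → Fin 4 → Fin 4 → ℝ)  -- Γ x μ l ν = {_l{}^μ{}_ν}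
    (hΓ : ∀ (x : Fin 4 → ℝ) (μ l ν : Fin 4),
      Γ x μ l ν = -(1/2) * ∑ β : Fin 4, ginv x μ β *
        (fderiv ℝ (fun y => g y β ν) x (Pi.single l 1)
          + fderiv ℝ (fun y => g y β l) x (Pi.single ν 1)
          - fderiv ℝ (fun y => g y l ν) x (Pi.single β 1)))
    (σ : (Fin 4 → ℝ) → (Fin 4 → ℝ) → Fin 4 → Fin 4 → ℝ)
    (K : (Fin 4 → ℝ) → (Fin 4 → ℝ) → Fin 4 → Fin 4 → ℝ)
    (hK : ∀ (x v : Fin 4 → ℝ) (μ l : Fin 4),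
      K x v μ l = (∑ ν : Fin 4, Γ x μ l ν * v ν) + σ x v μ l) :
    (∀ (x v : Fin 4 → ℝ), (∑ l : Fin 4, ∑ μ : Fin 4, g x l μ * v l * v μ) = 1 →
      ∑ l : Fin 4, ∑ ν : Fin 4,
        ((∑ μ : Fin 4, fderiv ℝ (fun y => g y μ ν) x (Pi.single l 1) * v μ)
          + 2 * ∑ μ : Fin 4, g x μ ν * K x v μ l) * v l * v ν = 0) ↔
    (∀ (x v : Fin 4 → ℝ), (∑ l : Fin 4, ∑ μ : Fin 4, g x l μ * v l * v μ) = 1 →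
      ∑ l : Fin 4, ∑ ν : Fin 4, ∑ μ : Fin 4, g x μ ν * σ x v μ l * v l * v ν = 0) := by
  -- The inverse metric is also a right inverse
  have key : ∀ (x : Fin 4 → ℝ) (ν β : Fin 4),
      ∑ μ : Fin 4, g x μ ν * ginv x μ β = if ν = β then 1 else 0 := by
    intro x ν β
    have h1 : (Matrix.of (ginv x)) * (Matrix.of (g x)) = 1 := by
      ext μ ν'
      simp [Matrix.mul_apply, Matrix.one_apply, hginv x μ ν']
    have h2 : (Matrix.of (g x)) * (Matrix.of (ginv x)) = 1 :=
      mul_eq_one_comm.mp h1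
    calc ∑ μ : Fin 4, g x μ ν * ginv x μ β
        = ∑ μ : Fin 4, g x ν μ * ginv x μ β :=
          Finset.sum_congr rfl fun μ _ => by rw [hgsymm]
      _ = (Matrix.of (g x) * Matrix.of (ginv x)) ν β := by
          simp [Matrix.mul_apply]
      _ = if ν = β then 1 else 0 := by rw [h2]; simp [Matrix.one_apply]
  -- Christoffel symbols in terms of Dg
  have hΓ' : ∀ (x : Fin 4 → ℝ) (μ l ν : Fin 4),
      Γ x μ l ν = -(1/2) * ∑ β : Fin 4, ginv x μ β *
        (Dg g x l β ν + Dg g x ν β l - Dg g x β l ν) := hΓ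
  -- symmetry of Dg in the last two slots
  have hDsymm : ∀ (x : Fin 4 → ℝ) (l μ ν : Fin 4), Dg g x l μ ν = Dg g x l ν μ := by
    intro x l μ ν
    unfold Dg
    have : (fun y => g y μ ν) = fun y => g y ν μ := funext fun y => hgsymm y μ ν
    rw [this]
  -- contraction with the metric kills the inverse metric
  have inner : ∀ (x : Fin 4 → ℝ) (ν l ρ : Fin 4),
      ∑ μ : Fin 4, g x μ ν * Γ x μ l ρ
        = -(1/2) * (Dg g x l ν ρ + Dg g x ρ ν l - Dg g x ν l ρ) := by
    intro x ν l ρ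
    calc ∑ μ : Fin 4, g x μ ν * Γ x μ l ρ
        = ∑ μ : Fin 4, ∑ β : Fin 4, (g x μ ν * ginv x μ β) *
            (-(1/2) * (Dg g x l β ρ + Dg g x ρ β l - Dg g x β l ρ)) := by
          refine Finset.sum_congr rfl fun μ _ => ?_
          rw [hΓ', Finset.mul_sum, Finset.mul_sum]
          exact Finset.sum_congr rfl fun β _ => by ring
      _ = ∑ β : Fin 4, (∑ μ : Fin 4, g x μ ν * ginv x μ β) *
            (-(1/2) * (Dg g x l β ρ + Dg g x ρ β l - Dg g x β l ρ)) := by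
          rw [Finset.sum_comm]
          exact Finset.sum_congr rfl fun β _ => (Finset.sum_mul _ _ _).symm
      _ = -(1/2) * (Dg g x l ν ρ + Dg g x ρ ν l - Dg g x ν l ρ) := by
          simp [key, Finset.sum_ite_eq]
  -- contracting K with the metric
  have hgK : ∀ (x v : Fin 4 → ℝ) (l ν : Fin 4),
      ∑ μ : Fin 4, g x μ ν * K x v μ l
        = -(1/2) * ∑ ρ : Fin 4,
            (Dg g x l ν ρ + Dg g x ρ ν l - Dg g x ν l ρ) * v ρ
          + ∑ μ : Fin 4, g x μ ν * σ x v μ l := by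
    intro x v l ν
    have h1 : ∑ μ : Fin 4, g x μ ν * K x v μ l
        = (∑ μ : Fin 4, g x μ ν * ∑ ρ : Fin 4, Γ x μ l ρ * v ρ)
          + ∑ μ : Fin 4, g x μ ν * σ x v μ l := by
      rw [← Finset.sum_add_distrib]
      exact Finset.sum_congr rfl fun μ _ => by rw [hK]; ring
    rw [h1]
    congr 1
    calc ∑ μ : Fin 4, g x μ ν * ∑ ρ : Fin 4, Γ x μ l ρ * v ρ
        = ∑ μ : Fin 4, ∑ ρ : Fin 4, (g x μ ν * Γ x μ l ρ) * v ρ := by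
          refine Finset.sum_congr rfl fun μ _ => ?_
          rw [Finset.mul_sum]
          exact Finset.sum_congr rfl fun ρ _ => by ring
      _ = ∑ ρ : Fin 4, (∑ μ : Fin 4, g x μ ν * Γ x μ l ρ) * v ρ := by
          rw [Finset.sum_comm]
          exact Finset.sum_congr rfl fun ρ _ => (Finset.sum_mul _ _ _).symm
      _ = ∑ ρ : Fin 4, (-(1/2) * (Dg g x l ν ρ + Dg g x ρ ν l - Dg g x ν l ρ)) * v ρ := by
          exact Finset.sum_congr rfl fun ρ _ => by rw [inner]
      _ = -(1/2) * ∑ ρ : Fin 4,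
            (Dg g x l ν ρ + Dg g x ρ ν l - Dg g x ν l ρ) * v ρ := by
          rw [Finset.mul_sum]
          exact Finset.sum_congr rfl fun ρ _ => by ring
  -- oriented symmetry rewrites
  have d10 : ∀ (x : Fin 4 → ℝ) (l : Fin 4), Dg g x l 1 0 = Dg g x l 0 1 := fun x l => hDsymm x l 1 0
  have d20 : ∀ (x : Fin 4 → ℝ) (l : Fin 4), Dg g x l 2 0 = Dg g x l 0 2 := fun x l => hDsymm x l 2 0
  have d21 : ∀ (x : Fin 4 → ℝ) (l : Fin 4), Dg g x l 2 1 = Dg g x l 1 2 := fun x l => hDsymm x l 2 1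
  have d30 : ∀ (x : Fin 4 → ℝ) (l : Fin 4), Dg g x l 3 0 = Dg g x l 0 3 := fun x l => hDsymm x l 3 0
  have d31 : ∀ (x : Fin 4 → ℝ) (l : Fin 4), Dg g x l 3 1 = Dg g x l 1 3 := fun x l => hDsymm x l 3 1
  have d32 : ∀ (x : Fin 4 → ℝ) (l : Fin 4), Dg g x l 3 2 = Dg g x l 2 3 := fun x l => hDsymm x l 3 2
  -- the main unconditional identity
  have main : ∀ (x v : Fin 4 → ℝ),
      ∑ l : Fin 4, ∑ ν : Fin 4,
        ((∑ μ : Fin 4, fderiv ℝ (fun y => g y μ ν) x (Pi.single l 1) * v μ)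
          + 2 * ∑ μ : Fin 4, g x μ ν * K x v μ l) * v l * v ν
      = 2 * ∑ l : Fin 4, ∑ ν : Fin 4, ∑ μ : Fin 4, g x μ ν * σ x v μ l * v l * v ν := by
    intro x v
    have hD : ∀ (l μ ν : Fin 4),
        fderiv ℝ (fun y => g y μ ν) x (Pi.single l 1) = Dg g x l μ ν := fun _ _ _ => rfl
    simp only [hD, hgK]
    simp only [Fin.sum_univ_four]
    simp only [d10, d20, d21, d30, d31, d32]
    ring
  constructor
  · intro h x v hxv
    have h1 := h x v hxv
    rw [main] at h1
    linarith
  · intro h x v hxv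
    have h1 := h x v hxv
    rw [main]
    rw [h1]
    ring
end
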